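/- arXiv:math/0611011 — 2 statements merged into one kernel-verified Lean document; each statement's English description precedes it below -/
import Mathlib

section
/- Let C be a small cancellative category (all morphisms are both monomorphisms and epimorphisms) containing no nonidentity retractions. Then for every morphism α of C, the comma category 𝔉C/α is a partially ordered set, i.e., between any two of its objects there is at most one morphism, and any two mutually inverse morphisms are identities. -/
open CategoryTheory

universe v u

/-- The factorization category `𝔉C` of a category `C`, realized as the category of elements
of the hom bifunctor `Cᵒᵖ × C ⥤ Type`. -/
def FactCat (C : Type u) [Category.{v} C] : Type (max u v) :=
  (Functor.hom C).Elements

instance (C : Type u) [Category.{v} C] : Category (FactCat C) :=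
  inferInstanceAs (Category (Functor.hom C).Elements)

section Aux

variable {C : Type u} [Category.{v} C]

/-- Morphisms in `FactCat C` into a fixed object are "monic" when all morphisms of `C`
are both mono and epi. -/
lemma FactCat.right_cancel
    (hmono : ∀ {a b : C} (f : a ⟶ b), Mono f)
    (hepi : ∀ {a b : C} (f : a ⟶ b), Epi f)
    {γ δ ε : FactCat C} (m : δ ⟶ ε) (k k' : γ ⟶ δ) (h : k ≫ m = k' ≫ m) : k = k' := by
  apply CategoryOfElements.ext
  have h1 : k.val ≫ m.val = k'.val ≫ m.val := congrArg Subtype.val h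
  have ha : k.val.1 ≫ m.val.1 = k'.val.1 ≫ m.val.1 := congrArg Prod.fst h1
  have hb : k.val.2 ≫ m.val.2 = k'.val.2 ≫ m.val.2 := congrArg Prod.snd h1
  have ha' : m.val.1.unop ≫ k.val.1.unop = m.val.1.unop ≫ k'.val.1.unop :=
    congrArg Quiver.Hom.unop ha
  have e1 : k.val.1.unop = k'.val.1.unop := (hepi m.val.1.unop).left_cancellation _ _ ha'
  have e2 : k.val.2 = k'.val.2 := (hmono m.val.2).right_cancellation _ _ hb
  exact Prod.ext (Quiver.Hom.unop_inj e1) e2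

/-- A pair of mutually inverse morphisms in `FactCat C` connects equal objects, and the
forward morphism is an `eqToHom`, when `C` has no nonidentity retractions. -/
lemma FactCat.iso_eq
    (hretr : ∀ {a b : C} (s : b ⟶ a) (r : a ⟶ b), s ≫ r = 𝟙 b → ∃ h : a = b, r = eqToHom h)
    {γ δ : FactCat C} (k : γ ⟶ δ) (l : δ ⟶ γ)
    (hkl : k ≫ l = 𝟙 γ) (hlk : l ≫ k = 𝟙 δ) : ∃ h : γ = δ, k = eqToHom h := by
  obtain ⟨⟨⟨a⟩, b⟩, fγ⟩ := γ
  obtain ⟨⟨⟨a'⟩, b'⟩, fδ⟩ := δ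
  have hkl1 : k.val ≫ l.val = 𝟙 _ := congrArg Subtype.val hkl
  have hlk1 : l.val ≫ k.val = 𝟙 _ := congrArg Subtype.val hlk
  -- second components
  have hb : k.val.2 ≫ l.val.2 = 𝟙 b := congrArg Prod.snd hkl1
  have hb' : l.val.2 ≫ k.val.2 = 𝟙 b' := congrArg Prod.snd hlk1
  obtain ⟨e2, -⟩ := hretr k.val.2 l.val.2 hb
  obtain ⟨e2', hk2⟩ := hretr l.val.2 k.val.2 hb'
  -- first components (in `Cᵒᵖ`, so unop)
  have haeq : l.val.1.unop ≫ k.val.1.unop = 𝟙 a :=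
    congrArg Quiver.Hom.unop (congrArg Prod.fst hkl1)
  have haeq' : k.val.1.unop ≫ l.val.1.unop = 𝟙 a' :=
    congrArg Quiver.Hom.unop (congrArg Prod.fst hlk1)
  obtain ⟨e1, hk1⟩ := hretr l.val.1.unop k.val.1.unop haeq
  -- substitute object equalities
  cases e1
  cases e2
  simp only [eqToHom_refl] at hk1 hk2
  have hkval : k.val = 𝟙 (⟨Opposite.op a, b⟩ : Cᵒᵖ × C) := by
    refine Prod.ext (Quiver.Hom.unop_inj ?_) hk2
    simpa using hk1
  have hsnd := k.2
  rw [hkval] at hsnd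
  simp only [FunctorToTypes.map_id_apply] at hsnd
  cases hsnd
  exact ⟨rfl, CategoryOfElements.ext _ _ _ hkval⟩

end Aux

/-- **Lemma (commapart).** Let `C` be a small cancellative category (every morphism is both
a monomorphism and an epimorphism) containing no nonidentity retractions.  Then for every
object `α` of `𝔉C` (i.e. every morphism of `C`) the comma category `𝔉C/α` is a partially
ordered set: between any two objects there is at most one morphism, and mutually inverse
morphisms only occur between equal objects. -/
theorem comma_of_factorization_is_poset (C : Type u) [Category.{v} C]
    (hmono : ∀ {a b : C} (f : a ⟶ b), Mono f)
    (hepi : ∀ {a b : C} (f : a ⟶ b), Epi f)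
    (hretr : ∀ {a b : C} (s : b ⟶ a) (r : a ⟶ b), s ≫ r = 𝟙 b → ∃ h : a = b, r = eqToHom h)
    (α : FactCat C) :
    (∀ (u v : Over α) (f g : u ⟶ v), f = g) ∧
    (∀ (u v : Over α), (u ⟶ v) → (v ⟶ u) → u = v) := by
  have huniq : ∀ (u v : Over α) (f g : u ⟶ v), f = g := by
    intro u v f g
    apply Over.OverMorphism.ext
    exact FactCat.right_cancel hmono hepi v.hom f.left g.left (by rw [Over.w f, Over.w g])
  refine ⟨huniq, ?_⟩
  intro u v f g
  have hfg : f ≫ g = 𝟙 u := huniq u u _ _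
  have hgf : g ≫ f = 𝟙 v := huniq v v _ _
  have hfg' : f.left ≫ g.left = 𝟙 u.left := by
    rw [← Over.comp_left, hfg]; rfl
  have hgf' : g.left ≫ f.left = 𝟙 v.left := by
    rw [← Over.comp_left, hgf]; rfl
  obtain ⟨h, hk⟩ := FactCat.iso_eq hretr f.left g.left hfg' hgf'
  have hw : f.left ≫ v.hom = u.hom := Over.w f
  obtain ⟨ul, ⟨⟨⟩⟩, uh⟩ := u
  obtain ⟨vl, ⟨⟨⟩⟩, vh⟩ := v
  dsimp only [Over.left, Over.hom] at h hk hw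
  subst h
  rw [hk] at hw
  simp only [eqToHom_refl, Category.id_comp] at hw
  subst hw
  rfl
end

section
/- Let M(E, I) be the free partially commutative monoid on a set E with irreflexive symmetric relation I ⊆ E × E (generated by E with relations ab = ba for (a,b) ∈ I). Then M(E, I) is cancellative: for all x, y, w₁, w₂ ∈ M(E, I), if y·w₁·x = y·w₂·x then w₁ = w₂. -/
universe u

/-- The defining relations of the free partially commutative monoid: `ab ~ ba` whenever
`(a, b) ∈ I`. -/
def pcRel (E : Type u) (I : E → E → Prop) : FreeMonoid E → FreeMonoid E → Prop :=
  fun w₁ w₂ => ∃ a b : E, I a b ∧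
    w₁ = FreeMonoid.of a * FreeMonoid.of b ∧ w₂ = FreeMonoid.of b * FreeMonoid.of a

/-- The congruence on the free monoid generated by the commutation relations. -/
def pcCon (E : Type u) (I : E → E → Prop) : Con (FreeMonoid E) := conGen (pcRel E I)

/-- The free partially commutative monoid `M(E, I)`: the quotient of the free monoid on `E`
by the congruence generated by `ab = ba` for `(a, b) ∈ I`. -/
abbrev FPCM (E : Type u) (I : E → E → Prop) : Type u := (pcCon E I).Quotient

open Classical in
/-- Projection onto the pair of letters `{a, b}` : keep only letters equal to `a` or `b`. -/
noncomputable def pcProj {E : Type u} (a b : E) (w : List E) : List E :=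
  w.filter (fun c => decide (c = a ∨ c = b))

open Classical

theorem pcProj_append {E : Type u} (a b : E) (u v : List E) :
    pcProj a b (u ++ v) = pcProj a b u ++ pcProj a b v :=
  List.filter_append ..

theorem pcProj_cons {E : Type u} (a b c : E) (u : List E) :
    pcProj a b (c :: u) =
      if c = a ∨ c = b then c :: pcProj a b u else pcProj a b u := by
  simp only [pcProj, List.filter_cons]
  by_cases h : c = a ∨ c = b <;> simp [h]

theorem mem_pcProj {E : Type u} {a b c : E} {u : List E} (h : c ∈ pcProj a b u) :
    c ∈ u ∧ (c = a ∨ c = b) := by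
  have := List.mem_filter.mp h
  simpa using this

/-- Projections onto dependent pairs are invariant under the congruence. -/
theorem pcProj_con {E : Type u} {I : E → E → Prop}
    (hirr : ∀ a : E, ¬ I a a) (hsym : ∀ a b : E, I a b → I b a)
    {a b : E} (hdep : ¬ I a b) {u v : FreeMonoid E} (h : pcCon E I u v) :
    pcProj a b (FreeMonoid.toList u) = pcProj a b (FreeMonoid.toList v) := by
  induction h with
  | of x y hxy =>
    obtain ⟨c, d, hcd, rfl, rfl⟩ := hxy
    have hne : c ≠ d := fun h => hirr c (h ▸ hcd)
    have key : ¬ ((c = a ∨ c = b) ∧ (d = a ∨ d = b)) := by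
      rintro ⟨hc | hc, hd | hd⟩
      · exact hne (hc.trans hd.symm)
      · exact hdep (hc ▸ hd ▸ hcd)
      · exact hdep (hc ▸ hd ▸ hsym _ _ hcd)
      · exact hne (hc.trans hd.symm)
    show pcProj a b [c, d] = pcProj a b [d, c]
    by_cases hc : c = a ∨ c = b <;> by_cases hd : d = a ∨ d = b
    · exact absurd ⟨hc, hd⟩ key
    all_goals simp [pcProj, hc, hd]
  | refl x => rfl
  | symm _ ih => exact ih.symm
  | trans _ _ ih₁ ih₂ => exact ih₁.trans ih₂
  | mul _ _ ih₁ ih₂ =>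
    show pcProj a b (_ ++ _) = pcProj a b (_ ++ _)
    rw [pcProj_append, pcProj_append, ih₁, ih₂]

theorem exists_first_occ {E : Type u} {a : E} :
    ∀ {v : List E}, a ∈ v → ∃ p s, v = p ++ a :: s ∧ a ∉ p := by
  intro v hv
  induction v with
  | nil => simp at hv
  | cons c t ih =>
    by_cases hca : c = a
    · exact ⟨[], t, by simp [hca], by simp⟩
    · have : a ∈ t := by
        rcases List.mem_cons.mp hv with h | h
        · exact absurd h.symm hca
        · exact h
      obtain ⟨p, s, hps, hap⟩ := ih this
      exact ⟨c :: p, s, by simp [hps], by simp [hap, Ne.symm hca]⟩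

/-- If every letter of `p` commutes with `a`, then `p ++ a :: s ~ a :: p ++ s`. -/
theorem con_front {E : Type u} {I : E → E → Prop} {a : E} :
    ∀ (p : List E), (∀ c ∈ p, I c a) → ∀ s : List E,
      pcCon E I (FreeMonoid.ofList (p ++ a :: s)) (FreeMonoid.ofList (a :: (p ++ s))) := by
  intro p
  induction p with
  | nil => intro _ s; exact (pcCon E I).refl _
  | cons c p ih =>
    intro hp s
    have h1 : pcCon E I (FreeMonoid.ofList (c :: (p ++ a :: s)))
        (FreeMonoid.ofList (c :: (a :: (p ++ s)))) :=
      (pcCon E I).mul ((pcCon E I).refl (FreeMonoid.ofList [c]))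
        (ih (fun x hx => hp x (List.mem_cons_of_mem _ hx)) s)
    have h2 : pcCon E I (FreeMonoid.ofList (c :: a :: (p ++ s)))
        (FreeMonoid.ofList (a :: c :: (p ++ s))) := by
      have hbase : pcCon E I (FreeMonoid.of c * FreeMonoid.of a)
          (FreeMonoid.of a * FreeMonoid.of c) :=
        ConGen.Rel.of _ _ ⟨c, a, hp c (List.mem_cons_self), rfl, rfl⟩
      exact (pcCon E I).mul hbase ((pcCon E I).refl (FreeMonoid.ofList (p ++ s)))
    exact (pcCon E I).trans h1 h2

/-- If all projections of `v` onto dependent pairs are empty, `v` is empty. -/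
theorem eq_nil_of_proj {E : Type u} {I : E → E → Prop} (hirr : ∀ a : E, ¬ I a a)
    {v : List E} (h : ∀ a b : E, ¬ I a b → pcProj a b ([] : List E) = pcProj a b v) :
    v = [] := by
  match v with
  | [] => rfl
  | c :: t =>
    exfalso
    have := h c c (hirr c)
    rw [pcProj_cons] at this
    simp [pcProj] at this

/-- The projection lemma: words with equal projections on all dependent pairs are congruent. -/
theorem proj_faithful_aux {E : Type u} {I : E → E → Prop}
    (hirr : ∀ a : E, ¬ I a a) (hsym : ∀ a b : E, I a b → I b a) :
    ∀ (n : ℕ) (u v : List E), u.length ≤ n →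
      (∀ a b : E, ¬ I a b → pcProj a b u = pcProj a b v) →
      pcCon E I (FreeMonoid.ofList u) (FreeMonoid.ofList v) := by
  intro n
  induction n with
  | zero =>
    intro u v hlen h
    have hu : u = [] := List.eq_nil_of_length_eq_zero (Nat.le_zero.mp hlen)
    subst hu
    rw [eq_nil_of_proj hirr h]
    exact (pcCon E I).refl _
  | succ n ihu =>
  intro u v hlen h
  match u with
  | [] =>
    rw [eq_nil_of_proj hirr h]
    exact (pcCon E I).refl _
  | a :: u' =>
    have ha : a ∈ v := by
      have := h a a (hirr a)
      rw [pcProj_cons] at this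
      simp only [or_self, if_pos rfl] at this
      have : a ∈ pcProj a a v := this ▸ List.mem_cons_self
      exact (mem_pcProj this).1
    obtain ⟨p, s, rfl, hap⟩ := exists_first_occ ha
    have hcomm : ∀ c ∈ p, I c a := by
      intro c hc
      by_contra hnc
      have hna : ¬ I a c := fun hac => hnc (hsym _ _ hac)
      have hca : c ≠ a := fun hh => hap (hh ▸ hc)
      have heq := h a c hna
      rw [pcProj_cons, if_pos (Or.inl rfl), pcProj_append, pcProj_cons,
        if_pos (Or.inl rfl)] at heq
      have hne : pcProj a c p ≠ [] := by
        intro hnil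
        have : c ∈ pcProj a c p := by
          simp only [pcProj, List.mem_filter]
          exact ⟨hc, by simp⟩
        rw [hnil] at this; simp at this
      obtain ⟨e, t, het⟩ := List.exists_cons_of_ne_nil hne
      have he : e ∈ pcProj a c p := het ▸ List.mem_cons_self
      obtain ⟨hep, hea⟩ := mem_pcProj he
      have hec : e = c := by
        rcases hea with h1 | h1
        · exact absurd (h1 ▸ hep) hap
        · exact h1
      rw [het] at heq
      simp only [List.cons_append, List.cons.injEq] at heq
      exact hca (hec ▸ heq.1.symm)
    have hfront := con_front p hcomm s (I := I)
    have hproj' : ∀ a' b' : E, ¬ I a' b' → pcProj a' b' u' = pcProj a' b' (p ++ s) := by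
      intro a' b' hd
      have h1 := h a' b' hd
      have h2 := pcProj_con hirr hsym hd hfront
      have h3 : pcProj a' b' (a :: u') = pcProj a' b' (a :: (p ++ s)) := h1.trans h2
      rw [pcProj_cons, pcProj_cons] at h3
      by_cases hcond : a = a' ∨ a = b'
      · rw [if_pos hcond, if_pos hcond] at h3
        exact List.tail_eq_of_cons_eq h3
      · rwa [if_neg hcond, if_neg hcond] at h3
    have hlen' : u'.length ≤ n := by
      have : u'.length + 1 ≤ n + 1 := by simpa using hlen
      omega
    have hrec : pcCon E I (FreeMonoid.ofList u') (FreeMonoid.ofList (p ++ s)) :=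
      ihu u' (p ++ s) hlen' hproj'
    have h4 : pcCon E I (FreeMonoid.ofList (a :: u')) (FreeMonoid.ofList (a :: (p ++ s))) :=
      (pcCon E I).mul ((pcCon E I).refl (FreeMonoid.ofList [a])) hrec
    exact (pcCon E I).trans h4 ((pcCon E I).symm hfront)

theorem proj_faithful {E : Type u} {I : E → E → Prop}
    (hirr : ∀ a : E, ¬ I a a) (hsym : ∀ a b : E, I a b → I b a)
    (u v : List E) (h : ∀ a b : E, ¬ I a b → pcProj a b u = pcProj a b v) :
    pcCon E I (FreeMonoid.ofList u) (FreeMonoid.ofList v) :=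
  proj_faithful_aux hirr hsym u.length u v le_rfl h

/-- **Cancellativity of free partially commutative monoids** (`E` may be infinite):
if `y·w₁·x = y·w₂·x` then `w₁ = w₂`. -/
theorem fpcm_cancellative (E : Type u) (I : E → E → Prop)
    (hirr : ∀ a : E, ¬ I a a) (hsym : ∀ a b : E, I a b → I b a)
    (x y w₁ w₂ : FPCM E I) (h : y * w₁ * x = y * w₂ * x) : w₁ = w₂ := by
  induction x using Con.induction_on with | H lx => ?_
  induction y using Con.induction_on with | H ly => ?_
  induction w₁ using Con.induction_on with | H l1 => ?_
  induction w₂ using Con.induction_on with | H l2 => ?_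
  rw [← Con.coe_mul, ← Con.coe_mul, ← Con.coe_mul, ← Con.coe_mul] at h
  have hcon : pcCon E I (ly * l1 * lx) (ly * l2 * lx) := (Con.eq _).mp h
  have hproj : ∀ a b : E, ¬ I a b →
      pcProj a b (FreeMonoid.toList l1) = pcProj a b (FreeMonoid.toList l2) := by
    intro a b hd
    have := pcProj_con hirr hsym hd hcon
    have heq : pcProj a b (FreeMonoid.toList ly ++ FreeMonoid.toList l1 ++ FreeMonoid.toList lx)
        = pcProj a b (FreeMonoid.toList ly ++ FreeMonoid.toList l2 ++ FreeMonoid.toList lx) :=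
      this
    rw [pcProj_append, pcProj_append, pcProj_append, pcProj_append] at heq
    have h1 := List.append_cancel_right heq
    exact List.append_cancel_left h1
  have : pcCon E I (FreeMonoid.ofList (FreeMonoid.toList l1))
      (FreeMonoid.ofList (FreeMonoid.toList l2)) := proj_faithful hirr hsym _ _ hproj
  simpa using (Con.eq _).mpr this
end
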